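/- The kernel of the log-derivation ∂_L, extended to the field of fractions ℱ of the Dirichlet convolution ring of arithmetic functions, equals ℂ: if f, g are arithmetic functions with g ≠ 0 and ∂_L f * g = f * ∂_L g, then f = α * g for some α ∈ ℂ. -/

import Mathlib

open ArithmeticFunction
open scoped Classical

/-- The embedding of `ℂ` into the Dirichlet ring of arithmetic functions,
sending `c` to the function with value `c` at `1` and `0` elsewhere. -/
noncomputable def CC : ℂ →+* ArithmeticFunction ℂ where
  toFun c := ⟨fun n => if n = 1 then c else 0, by simp⟩
  map_zero' := by ext n; simp
  map_one' := by ext n; simp [ArithmeticFunction.one_apply]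
  map_add' a b := by ext n; erw [ArithmeticFunction.add_apply]; by_cases h : n = 1 <;> simp [h]
  map_mul' a b := by
    ext n
    erw [ArithmeticFunction.mul_apply]
    by_cases h : n = 1
    · subst h
      rw [show Nat.divisorsAntidiagonal 1 = {(1,1)} from rfl]
      simp
    · rw [Finset.sum_eq_zero]
      · simp [h]
      · rintro ⟨d, e⟩ hde
        rw [Nat.mem_divisorsAntidiagonal] at hde
        rcases Decidable.eq_or_ne d 1 with hd | hd
        · have : e ≠ 1 := by rintro rfl; exact h (by simp [← hde.1, hd])
          simp [this]
        · simp [hd]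

/-- The order `v f` of an arithmetic function: the least element of the support
(`sInf` of the empty set is `0` for `f = 0`; that case is always excluded by hypotheses). -/
noncomputable def ordN (f : ArithmeticFunction ℂ) : ℕ := sInf {n : ℕ | f n ≠ 0}

/-- The order as an extended natural number, `⊤` for `f = 0`. -/
noncomputable def ordE (f : ArithmeticFunction ℂ) : ℕ∞ :=
  sInf ((fun n : ℕ => (n : ℕ∞)) '' {n : ℕ | f n ≠ 0})

/-- The norm `‖f‖ = 1/v(f)`, with `1/∞ = 0`. -/
noncomputable def nrm (f : ArithmeticFunction ℂ) : ℝ :=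
  if f = 0 then 0 else 1 / (ordN f : ℝ)

/-- Extension of an arithmetic function to `ℝ`, vanishing off `ℕ`. -/
noncomputable def extR (f : ArithmeticFunction ℂ) (x : ℝ) : ℂ :=
  if h : ∃ n : ℕ, (n : ℝ) = x then f h.choose else 0

/-- The exponential map `Exp f = exp(f 1) * ∑ (f - f 1)^k / k!` of the Dirichlet ring.
Since `(f - f 1)^k` has order `≥ 2^k`, the value of the infinite series at `n` equals the
value of the partial sum up to `k = n`. -/
noncomputable def ExpA (f : ArithmeticFunction ℂ) : ArithmeticFunction ℂ :=
  ⟨fun n => Complex.exp (f 1) *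
      ((∑ k ∈ Finset.range (n + 1),
        CC ((Nat.factorial k : ℂ)⁻¹) * (f - CC (f 1)) ^ k) n), by simp⟩

/-- The `p`-basic derivation `(∂_p f) n = v_p (n p) • f (n p)`. -/
noncomputable def DP (p : ℕ) (f : ArithmeticFunction ℂ) : ArithmeticFunction ℂ :=
  ⟨fun n => (padicValNat p (n * p) : ℂ) * f (n * p), by simp⟩

/-- The log-derivation `(∂_L f) n = log n * f n`. -/
noncomputable def DL (f : ArithmeticFunction ℂ) : ArithmeticFunction ℂ :=
  ⟨fun n => (Real.log n : ℂ) * f n, by simp⟩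

/-- The pointwise multiplication operator `𝔪_g`. -/
noncomputable def MG (g f : ArithmeticFunction ℂ) : ArithmeticFunction ℂ :=
  ⟨fun n => g n * f n, by simp⟩

/-- Integer powers `𝔪_g^i` of the pointwise multiplication operator:
`(𝔪_g^i f) n = (g n)^i * f n`. -/
noncomputable def MGi (g : ArithmeticFunction ℂ) (i : ℤ) (f : ArithmeticFunction ℂ) :
    ArithmeticFunction ℂ := ⟨fun n => g n ^ i * f n, by simp⟩

/-- `D` is a (ℂ-linear) derivation of the ring of arithmetic functions
under Dirichlet convolution. -/
def IsDerivationA (D : ArithmeticFunction ℂ → ArithmeticFunction ℂ) : Prop :=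
  (∀ f g, D (f + g) = D f + D g) ∧
  (∀ (c : ℂ) (f), D (CC c * f) = CC c * D f) ∧
  (∀ f g, D (f * g) = D f * g + f * D g)

/-- Convergence of a sequence of arithmetic functions in the norm topology. -/
def TendstoA (s : ℕ → ArithmeticFunction ℂ) (l : ArithmeticFunction ℂ) : Prop :=
  Filter.Tendsto (fun m => nrm (s m - l)) Filter.atTop (nhds 0)

/-- (Sequential) continuity of a map in the norm topology, which for this
ultrametric is equivalent to continuity. -/
def ContinuousA (D : ArithmeticFunction ℂ → ArithmeticFunction ℂ) : Prop :=
  ∀ (s : ℕ → ArithmeticFunction ℂ) (l), TendstoA s l → TendstoA (fun m => D (s m)) (D l)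

/-- The indicator function `e_m` of the singleton `{m}`. -/
noncomputable def En (m : ℕ) : ArithmeticFunction ℂ :=
  ⟨fun n => if 0 < n ∧ n = m then 1 else 0, by simp⟩

/-- The constant one arithmetic function `𝟙`. -/
noncomputable def OneA : ArithmeticFunction ℂ := ⟨fun n => if n = 0 then 0 else 1, by simp⟩

/-- The ℂ-algebra structure of the ring of arithmetic functions, via `CC`. -/
noncomputable instance : Algebra ℂ (ArithmeticFunction ℂ) := CC.toAlgebra

/-!
Let `v(F)` be the least point of the support of `F`. Since `d * e = v(F) * v(G)` with
`v(F) ≤ d`, `v(G) ≤ e` forces `d = v(F)`, `e = v(G)`, the convolution `F * G` at `v(F) * v(G)`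
is just `F (v F) * G (v G)`. Evaluating `∂_L f * g = f * ∂_L g` there gives
`(log v(f) - log v(g)) f(v f) g(v g) = 0`, so solutions of this equation share their order.
With `α = f(b) / g(b)` for `b = v(g)`, the function `f - α g` solves the same equation but
vanishes at `b`, so it must be `0`.
-/

namespace ArithmeticFunction

theorem sub_apply {R : Type*} [AddGroup R] (f g : ArithmeticFunction R) (n : ℕ) :
    (f - g) n = f n - g n := by
  rw [sub_eq_add_neg, add_apply, neg_apply, sub_eq_add_neg]

theorem mul_apply_mul_of_forall_lt {R : Type*} [Semiring R] {F G : ArithmeticFunction R}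
    {a b : ℕ} (hF : ∀ d < a, F d = 0) (hG : ∀ e < b, G e = 0) :
    (F * G) (a * b) = F a * G b := by
  rcases Nat.eq_zero_or_pos a with rfl | ha
  · simp
  rcases Nat.eq_zero_or_pos b with rfl | hb
  · simp
  rw [mul_apply, Finset.sum_eq_single_of_mem (a, b)
    (Nat.mem_divisorsAntidiagonal.mpr ⟨rfl, by positivity⟩)]
  rintro ⟨d, e⟩ hde hne
  obtain ⟨hde, -⟩ := Nat.mem_divisorsAntidiagonal.mp hde
  rcases Nat.lt_or_ge d a with hd | hd
  · simp [hF d hd]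
  rcases Nat.lt_or_ge e b with he | he
  · simp [hG e he]
  exfalso
  obtain rfl : d = a := le_antisymm (by nlinarith [Nat.mul_le_mul_left d he]) hd
  exact hne (Prod.ext rfl (Nat.eq_of_mul_eq_mul_left ha hde))

end ArithmeticFunction

lemma CC_apply (c : ℂ) (n : ℕ) : CC c n = if n = 1 then c else 0 := rfl

lemma CC_mul_apply (c : ℂ) (g : ArithmeticFunction ℂ) (n : ℕ) :
    (CC c * g) n = c * g n := by
  rcases Nat.eq_zero_or_pos n with rfl | hn
  · simp
  rw [mul_apply, Finset.sum_eq_single_of_mem (1, n)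
    (Nat.mem_divisorsAntidiagonal.mpr ⟨one_mul n, hn.ne'⟩)]
  · rfl
  rintro ⟨d, e⟩ hde hne
  obtain ⟨hde, -⟩ := Nat.mem_divisorsAntidiagonal.mp hde
  have hd : d ≠ 1 := by rintro rfl; exact hne (by simp_all)
  simp [CC_apply, hd]

lemma DL_apply (f : ArithmeticFunction ℂ) (n : ℕ) : DL f n = (Real.log n : ℂ) * f n := rfl

lemma DL_sub_CC_mul (f g : ArithmeticFunction ℂ) (c : ℂ) :
    DL (f - CC c * g) = DL f - CC c * DL g := by
  ext n
  simp only [DL_apply, ArithmeticFunction.sub_apply, CC_mul_apply]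
  ring

lemma apply_eq_zero_of_lt_ordN {f : ArithmeticFunction ℂ} {n : ℕ} (hn : n < ordN f) :
    f n = 0 :=
  not_not.mp (Nat.notMem_of_lt_sInf hn)

lemma apply_ordN_ne_zero {f : ArithmeticFunction ℂ} (hf : f ≠ 0) : f (ordN f) ≠ 0 := by
  obtain ⟨n, hn⟩ : ∃ n, f n ≠ 0 := by simpa [ArithmeticFunction.ext_iff] using hf
  exact Nat.sInf_mem (s := {n | f n ≠ 0}) ⟨n, hn⟩

lemma ordN_pos {f : ArithmeticFunction ℂ} (hf : f ≠ 0) : 0 < ordN f :=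
  Nat.pos_of_ne_zero fun h => apply_ordN_ne_zero hf (by rw [h, ArithmeticFunction.map_zero])

lemma ordN_eq_of_DL_mul_eq {f g : ArithmeticFunction ℂ} (hf : f ≠ 0) (hg : g ≠ 0)
    (h : DL f * g = f * DL g) : ordN f = ordN g := by
  have hvanish (F : ArithmeticFunction ℂ) : ∀ n < ordN F, F n = 0 :=
    fun _ => apply_eq_zero_of_lt_ordN
  have hDL (F : ArithmeticFunction ℂ) : ∀ n < ordN F, DL F n = 0 := fun n hn => by
    rw [DL_apply, hvanish F n hn, mul_zero]
  have hlead := congrArg (· (ordN f * ordN g)) h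
  simp only [mul_apply_mul_of_forall_lt (hDL f) (hvanish g),
    mul_apply_mul_of_forall_lt (hvanish f) (hDL g), DL_apply] at hlead
  have hlog : (Real.log (ordN f) : ℂ) = Real.log (ordN g) :=
    mul_right_cancel₀ (mul_ne_zero (apply_ordN_ne_zero hf) (apply_ordN_ne_zero hg))
      (by linear_combination hlead)
  have hpos : ∀ {F : ArithmeticFunction ℂ}, F ≠ 0 → ((ordN F : ℕ) : ℝ) ∈ Set.Ioi 0 :=
    fun hF => Set.mem_Ioi.mpr (Nat.cast_pos.mpr (ordN_pos hF))
  exact_mod_cast Real.log_injOn_pos (hpos hf) (hpos hg) (by exact_mod_cast hlog)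

/-- The kernel of the log-derivation on the fraction field of the Dirichlet ring is `ℂ`:
if `g ≠ 0` and `∂_L f * g = f * ∂_L g`, then `f = α * g` for some `α ∈ ℂ`. -/
theorem stmt18 (f g : ArithmeticFunction ℂ) (hg : g ≠ 0)
    (h : DL f * g = f * DL g) :
    ∃ α : ℂ, f = CC α * g := by
  set b := ordN g
  refine ⟨f b / g b, sub_eq_zero.mp ?_⟩
  by_contra hF
  have hFb : (f - CC (f b / g b) * g) b = 0 := by
    rw [ArithmeticFunction.sub_apply, CC_mul_apply, div_mul_cancel₀ _ (apply_ordN_ne_zero hg),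
      sub_self]
  have hF_eq : DL (f - CC (f b / g b) * g) * g = (f - CC (f b / g b) * g) * DL g := by
    rw [DL_sub_CC_mul, sub_mul, sub_mul, h, mul_assoc, mul_assoc, mul_comm (DL g) g]
  exact apply_ordN_ne_zero hF (ordN_eq_of_DL_mul_eq hF hg hF_eq ▸ hFb)
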